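/- For every n ≥ 0, the associahedron hypergraph (linear graph) 𝕂ₙ = {{i} : 1 ≤ i ≤ n+1} ∪ {{i,i+1} : 1 ≤ i ≤ n} on H = {1,…,n+1} is a connected contextual hypergraph. -/

import Mathlib

open scoped Classical

noncomputable section

/-! ## Hypergraphs (nestohedra combinatorics), after Curien–Laplante-Anfossi:
hypergraphs, restrictions, connectivity, saturation, reconnected restriction,
constructs/constructions, the face order, the flip rewriting, and terms over the
associated signatures. -/

/-- A hypergraph on a finite vertex set: a finite set of nonempty hyperedges whose union is
the vertex set, assumed atomic (every singleton is a hyperedge). -/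
structure NestHypergraph (α : Type*) [DecidableEq α] where
  verts : Finset α
  edges : Finset (Finset α)
  edges_nonempty : ∀ e ∈ edges, e.Nonempty
  edges_subset : ∀ e ∈ edges, e ⊆ verts
  atomic : ∀ v ∈ verts, {v} ∈ edges

namespace NestHypergraph

variable {α : Type*} [DecidableEq α]

/-- The plain restriction `𝓗_X` of a hypergraph to a subset `X` of its vertices. -/
def restrict (H : NestHypergraph α) (X : Finset α) : NestHypergraph α where
  verts := X ∩ H.verts
  edges := H.edges.filter (· ⊆ X)
  edges_nonempty e he := H.edges_nonempty e (Finset.mem_filter.mp he).1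
  edges_subset e he :=
    Finset.subset_inter (Finset.mem_filter.mp he).2 (H.edges_subset e (Finset.mem_filter.mp he).1)
  atomic v hv := by
    rcases Finset.mem_inter.mp hv with ⟨h1, h2⟩
    exact Finset.mem_filter.mpr ⟨H.atomic v h2, Finset.singleton_subset_iff.mpr h1⟩

/-- A hypergraph is connected if its vertex set is nonempty and admits no nontrivial
partition `X₁ ∪ X₂` such that every edge lies in `X₁` or in `X₂`. -/
def Connected (H : NestHypergraph α) : Prop :=
  H.verts.Nonempty ∧ ∀ X₁ X₂ : Finset α, X₁.Nonempty → X₂.Nonempty →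
    Disjoint X₁ X₂ → X₁ ∪ X₂ = H.verts → ∃ e ∈ H.edges, ¬e ⊆ X₁ ∧ ¬e ⊆ X₂

/-- `C` is (the vertex set of) a connected component of `H`: a maximal connected subset. -/
def IsComponent (H : NestHypergraph α) (C : Finset α) : Prop :=
  C ⊆ H.verts ∧ (H.restrict C).Connected ∧
    ∀ D : Finset α, C ⊆ D → D ⊆ H.verts → (H.restrict D).Connected → D = C

/-- `y` and `z` lie in the same connected component of `H`. -/
def SameComponent (H : NestHypergraph α) (y z : α) : Prop :=
  ∃ C : Finset α, H.IsComponent C ∧ y ∈ C ∧ z ∈ C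

/-- The saturation `Sat(𝓗)`: the set of (nonempty) connected subsets of vertices. -/
def sat (H : NestHypergraph α) : Finset (Finset α) :=
  H.verts.powerset.filter fun X => (H.restrict X).Connected

theorem singleton_connected (H : NestHypergraph α) {v : α} (hv : v ∈ H.verts) :
    (H.restrict {v}).Connected := by
  constructor
  · exact ⟨v, Finset.mem_inter.mpr ⟨Finset.mem_singleton_self v, hv⟩⟩
  · intro X₁ X₂ h₁ h₂ hd hu
    exfalso
    have hv' : ({v} : Finset α) ∩ H.verts = {v} :=
      Finset.inter_eq_left.mpr (Finset.singleton_subset_iff.mpr hv)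
    have hu' : X₁ ∪ X₂ = ({v} : Finset α) := hu.trans hv'
    have hX₁ : X₁ ⊆ {v} := hu' ▸ Finset.subset_union_left
    have hX₂ : X₂ ⊆ {v} := hu' ▸ Finset.subset_union_right
    obtain ⟨a, ha⟩ := h₁
    obtain ⟨b, hb⟩ := h₂
    have ha' := Finset.mem_singleton.mp (hX₁ ha)
    have hb' := Finset.mem_singleton.mp (hX₂ hb)
    subst ha'; exact Finset.disjoint_left.mp hd ha (hb' ▸ hb)

/-- The reconnected restriction `𝓗 ↾ X` of `𝓗` to `X`. -/
def reconRestrict (H : NestHypergraph α) (X : Finset α) : NestHypergraph α where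
  verts := X ∩ H.verts
  edges := (H.sat.image (· ∩ X)).filter (·.Nonempty)
  edges_nonempty e he := (Finset.mem_filter.mp he).2
  edges_subset := by
    intro e he
    rcases Finset.mem_image.mp (Finset.mem_filter.mp he).1 with ⟨Z, hZ, rfl⟩
    have hZv : Z ⊆ H.verts := Finset.mem_powerset.mp (Finset.mem_filter.mp hZ).1
    exact fun a ha => Finset.mem_inter.mpr
      ⟨(Finset.mem_inter.mp ha).2, hZv (Finset.mem_inter.mp ha).1⟩
  atomic := by
    intro v hv
    rcases Finset.mem_inter.mp hv with ⟨h1, h2⟩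
    refine Finset.mem_filter.mpr ⟨Finset.mem_image.mpr ⟨{v}, ?_, ?_⟩, ?_⟩
    · exact Finset.mem_filter.mpr
        ⟨Finset.mem_powerset.mpr (Finset.singleton_subset_iff.mpr h2),
         H.singleton_connected h2⟩
    · exact Finset.inter_eq_left.mpr (Finset.singleton_subset_iff.mpr h1)
    · exact ⟨v, by simp [Finset.inter_eq_left.mpr (Finset.singleton_subset_iff.mpr h1)]⟩

/-- `x ⇝ {y,z}` in `𝓗`: after removing `x`, the vertices `y` and `z` lie in the same
connected component.  Its negation is "`x` disconnects `y` and `z` in `𝓗`". -/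
def Links (H : NestHypergraph α) (x y z : α) : Prop :=
  (H.restrict (H.verts \ {x})).SameComponent y z

/-- A hypergraph is contextual if for every connected subset `Y` of cardinality at least 3
and all distinct `x, y, z ∈ Y`, `x` disconnects `y` and `z` in `𝓗_Y` iff it does in `𝓗`. -/
def Contextual (H : NestHypergraph α) : Prop :=
  ∀ Y : Finset α, Y ⊆ H.verts → (H.restrict Y).Connected → 3 ≤ Y.card →
    ∀ x y z : α, x ∈ Y → y ∈ Y → z ∈ Y → x ≠ y → y ≠ z → x ≠ z →
      ((H.restrict Y).Links x y z ↔ H.Links x y z)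

end NestHypergraph

/-- Finite rooted trees with nodes decorated by finite sets (potential constructs). -/
inductive FTree (α : Type*) : Type _ where
  | node : Finset α → List (FTree α) → FTree α

namespace FTree

variable {α : Type*} [DecidableEq α]

/-- The decoration of the root node. -/
def label : FTree α → Finset α
  | node Y _ => Y

/-- The list of children of the root node. -/
def children : FTree α → List (FTree α)
  | node _ ts => ts

/-- The support of a tree: the union of the decorations of its nodes. -/
def support : FTree α → Finset α
  | node Y [] => Y
  | node Y (t :: ts) => support t ∪ support (node Y ts)

/-- The list of decorations of the nodes of a tree. -/
def labels : FTree α → List (Finset α)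
  | node Y [] => [Y]
  | node Y (t :: ts) => labels t ++ labels (node Y ts)

/-- The dimension of a construct: the sum over its nodes `X` of `|X| - 1`. -/
def dim (T : FTree α) : ℕ := (T.labels.map fun X => X.card - 1).sum

mutual
  /-- The (full) subtree rooted at the node decorated by `X`, if any. -/
  def subtreeAt : FTree α → Finset α → Option (FTree α)
    | node Y ts, X => if Y = X then some (node Y ts) else subtreeAtList ts X
  def subtreeAtList : List (FTree α) → Finset α → Option (FTree α)
    | [], _ => none
    | t :: ts, X => (subtreeAt t X).elim (subtreeAtList ts X) some
end

/-- The support `supp (T ↾ X)` of the subtree rooted at the node decorated by `X`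
(or `∅` if there is no such node). -/
def suppAt (T : FTree α) (X : Finset α) : Finset α :=
  ((T.subtreeAt X).map support).getD ∅

mutual
  /-- The list of supports of the subtrees rooted at the nodes of `T` (its nested set). -/
  def nests : FTree α → List (Finset α)
    | node Y ts => support (node Y ts) :: nestsList ts
  def nestsList : List (FTree α) → List (Finset α)
    | [] => []
    | t :: ts => nests t ++ nestsList ts
end

/-- The nested set of a tree, as a finite set. -/
def nestSet (T : FTree α) : Finset (Finset α) := T.nests.toFinset

/-- `S ≺ T` (`S` is covered by `T`) in the face order: `T` is obtained from `S` by
contracting one edge between a node and its father (equivalently, the nested set of `T`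
is obtained from that of `S` by removing one non-root element). -/
def CoveredBy (S T : FTree α) : Prop :=
  ∃ N ∈ S.nests, N ≠ S.support ∧ T.nestSet = S.nestSet.erase N

/-- The face (subface) order `S ≼ T` on constructs: the reflexive–transitive closure of
the covering relation `≺`. -/
def FaceLe (S T : FTree α) : Prop := Relation.ReflTransGen CoveredBy S T

/-- `IsSubtree S T`: `S` is a (full) subtree of `T`. -/
inductive IsSubtree : FTree α → FTree α → Prop
  | refl (t : FTree α) : IsSubtree t t
  | child {s t u : FTree α} : IsSubtree s t → t ∈ u.children → IsSubtree s u

/-- In `T`, the node decorated by `X` has a child decorated by `Y`. -/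
def ParentChild (X Y : Finset α) (T : FTree α) : Prop :=
  ∃ R : FTree α, IsSubtree R T ∧ R.label = X ∧ ∃ t ∈ R.children, t.label = Y

mutual
  /-- Pruning: remove all (subtrees rooted at) nodes whose decoration is not a subset
  of `X`, keeping the root. -/
  def prune (X : Finset α) : FTree α → FTree α
    | node Y ts => node Y (pruneList X ts)
  def pruneList (X : Finset α) : List (FTree α) → List (FTree α)
    | [] => []
    | t :: ts => if t.label ⊆ X then prune X t :: pruneList X ts else pruneList X ts
end

end FTree

/-- `IsConstruct H T`: the tree `T` is a construct of the hypergraph `H`: its root `Y` is a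
nonempty subset of the vertices, its children are constructs of the connected components of
`𝓗 ∖ Y` (one for each component, listed by increasing maximal vertex). -/
inductive IsConstruct {α : Type*} [LinearOrder α] : NestHypergraph α → FTree α → Prop
  | node {H : NestHypergraph α} (Y : Finset α) (ts : List (FTree α))
      (hY : Y.Nonempty) (hYsub : Y ⊆ H.verts)
      (hmem : ∀ t ∈ ts, (H.restrict (H.verts \ Y)).IsComponent t.support)
      (hcover : ∀ C : Finset α, (H.restrict (H.verts \ Y)).IsComponent C →
        ∃ t ∈ ts, t.support = C)
      (hsorted : ts.Pairwise fun a b => a.support.max < b.support.max)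
      (hchild : ∀ t ∈ ts, IsConstruct (H.restrict t.support) t) :
      IsConstruct H (FTree.node Y ts)

section ConstructionOrder

variable {α : Type*} [LinearOrder α]

/-- A construction: a construct all of whose nodes are singletons (a vertex of the
nestohedron). -/
def IsConstruction (H : NestHypergraph α) (T : FTree α) : Prop :=
  IsConstruct H T ∧ ∀ X ∈ T.labels, X.card = 1

/-- An `X`-face: a 2-dimensional construct whose unique non-singleton node is decorated
by `X`, of cardinality 3. -/
def IsXFace (H : NestHypergraph α) (X : Finset α) (T : FTree α) : Prop :=
  IsConstruct H T ∧ X.card = 3 ∧ X ∈ T.labels ∧ ∀ Y ∈ T.labels, Y ≠ X → Y.card = 1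

/-- Two distinct constructions are joined by an edge of the nestohedron: both are covered
by a common 1-dimensional construct. -/
def EdgeJoined (H : NestHypergraph α) (S T : FTree α) : Prop :=
  IsConstruction H S ∧ IsConstruction H T ∧ S ≠ T ∧
  ∃ V : FTree α, IsConstruct H V ∧ V.dim = 1 ∧ FTree.CoveredBy S V ∧ FTree.CoveredBy T V

/-- The flip rewriting relation `S → T` on constructions of an ordered hypergraph:
`S` and `T` are the two endpoints of an edge whose 1-dimensional face has unique
non-singleton node `{x, y}` with `x < y`, and in `S` the node `{x}` is the parent of the
node `{y}`. -/
def Flip (H : NestHypergraph α) (S T : FTree α) : Prop :=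
  IsConstruction H S ∧ IsConstruction H T ∧ S ≠ T ∧
  ∃ (V : FTree α) (x y : α), IsConstruct H V ∧ V.dim = 1 ∧ x ≠ y ∧
    ({x, y} : Finset α) ∈ V.labels ∧ FTree.CoveredBy S V ∧ FTree.CoveredBy T V ∧
    FTree.ParentChild ({x} : Finset α) ({y} : Finset α) S ∧ x < y

/-- The coordinate vector of a construction `S` of `H`:
`v^S_x = |{e ∈ Sat(𝓗) : x ∈ e ⊆ supp (S ↾ x)}|`. -/
def coordVec (H : NestHypergraph α) (S : FTree α) (x : α) : ℕ :=
  (H.sat.filter fun e => x ∈ e ∧ e ⊆ S.suppAt {x}).card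

end ConstructionOrder

/-- Raw terms over the signature `Σ_𝓗` (and `Σ^c_𝓗`): variables are (connected) subsets,
function symbols are pairs `(X, Y)` of subsets, applied to a list of arguments. -/
inductive HTerm (α : Type*) : Type _ where
  | var : Finset α → HTerm α
  | app : Finset α → Finset α → List (HTerm α) → HTerm α

namespace HTerm

variable {α : Type*} [DecidableEq α]

/-- The (output) sort of a term. -/
def sortOf : HTerm α → Finset α
  | var A => A
  | app _ Y _ => Y

/-- The list of variables occurring in a term. -/
def varsList : HTerm α → List (Finset α)
  | var A => [A]
  | app _ _ [] => []
  | app X Y (t :: ts) => varsList t ++ varsList (app X Y ts)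

/-- The list of first components of the function symbols occurring in a term. -/
def appFirsts : HTerm α → List (Finset α)
  | var _ => []
  | app X _ [] => [X]
  | app X Y (t :: ts) => appFirsts t ++ appFirsts (app X Y ts)

/-- A term is closed if it contains no variables. -/
def Closed (t : HTerm α) : Prop := t.varsList = []

/-- The union `⋃ var(t)` of the variables of a term. -/
def varsUnion (t : HTerm α) : Finset α := t.varsList.foldr (· ∪ ·) ∅

mutual
  /-- Projection of a term to a decorated tree: every function symbol `(X, Y)` is sent to
  its first component `X`, and all variables are pruned. -/
  def toTree : HTerm α → FTree α
    | .var A => .node A []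
    | .app X _ ts => .node X (toTreeList ts)
  def toTreeList : List (HTerm α) → List (FTree α)
    | [] => []
    | .var _ :: ts => toTreeList ts
    | t :: ts => toTree t :: toTreeList ts
end

end HTerm

/-- Well-formed terms over the signature `Σ_𝓗` associated with the hypergraph `H`:
a variable is a connected subset (its own sort); a function symbol `(X, Y)` (with
`∅ ≠ X ⊆ Y ⊆ H` and `Y` connected) is applied to arguments whose sorts are exactly the
connected components of `𝓗_Y ∖ X`, listed by increasing maximal vertex. -/
inductive IsTerm {α : Type*} [LinearOrder α] (H : NestHypergraph α) : HTerm α → Prop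
  | var (A : Finset α) : A ⊆ H.verts → (H.restrict A).Connected → IsTerm H (.var A)
  | app (X Y : Finset α) (ts : List (HTerm α)) :
      X.Nonempty → X ⊆ Y → Y ⊆ H.verts → (H.restrict Y).Connected →
      (∀ t ∈ ts, (H.restrict (Y \ X)).IsComponent t.sortOf) →
      (∀ C : Finset α, (H.restrict (Y \ X)).IsComponent C → ∃ t ∈ ts, t.sortOf = C) →
      ts.Pairwise (fun a b => a.sortOf.max < b.sortOf.max) →
      (∀ t ∈ ts, IsTerm H t) →
      IsTerm H (.app X Y ts)


/-- The associahedron hypergraph (linear graph) `𝕂ₙ` on `{1, …, n+1}`: all singletons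
together with the edges `{i, i+1}` for `1 ≤ i ≤ n`. -/
def linearH (n : ℕ) : NestHypergraph ℕ where
  verts := Finset.Icc 1 (n + 1)
  edges := (Finset.Icc 1 (n + 1)).image (fun i => {i}) ∪
    (Finset.Icc 1 n).image (fun i => {i, i + 1})
  edges_nonempty := by
    intro e he
    rcases Finset.mem_union.mp he with h | h
    · rcases Finset.mem_image.mp h with ⟨i, _, rfl⟩
      exact ⟨i, Finset.mem_singleton_self i⟩
    · rcases Finset.mem_image.mp h with ⟨i, _, rfl⟩
      exact ⟨i, Finset.mem_insert_self i _⟩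
  edges_subset := by
    intro e he
    rcases Finset.mem_union.mp he with h | h
    · rcases Finset.mem_image.mp h with ⟨i, hi, rfl⟩
      exact Finset.singleton_subset_iff.mpr hi
    · rcases Finset.mem_image.mp h with ⟨i, hi, rfl⟩
      rw [Finset.mem_Icc] at hi
      refine Finset.insert_subset_iff.mpr ⟨?_, Finset.singleton_subset_iff.mpr ?_⟩ <;>
        rw [Finset.mem_Icc] <;> omega
  atomic := fun v hv => Finset.mem_union_left _ (Finset.mem_image_of_mem _ hv)

/-! In `𝕂ₙ` the connected sets are exactly the nonempty intervals, so `y` and `z` lie in one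
component of `𝓗_S` iff `[y, z] ⊆ S`. Hence `x` fails to disconnect `y` and `z` in `𝓗_Y` iff
`[y, z] ⊆ Y ∖ {x}`; a connected `Y ∋ y, z` contains `[y, z]`, so this just says `x ∉ [y, z]`,
whatever the context `Y`. -/

theorem Nat.exists_le_lt_of_not {p : ℕ → Prop} {a b : ℕ} (hab : a ≤ b) (ha : p a) (hb : ¬p b) :
    ∃ i, a ≤ i ∧ i < b ∧ p i ∧ ¬p (i + 1) := by
  induction b, hab using Nat.le_induction with
  | base => exact absurd ha hb
  | succ b hab ih =>
    by_cases hpb : p b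
    · exact ⟨b, hab, b.lt_succ_self, hpb, hb⟩
    · obtain ⟨i, hai, hib, hi⟩ := ih hpb
      exact ⟨i, hai, hib.trans b.lt_succ_self, hi⟩

namespace NestHypergraph

section

variable {α : Type*} [DecidableEq α] (H : NestHypergraph α)

theorem ext {H₁ H₂ : NestHypergraph α} (hv : H₁.verts = H₂.verts) (he : H₁.edges = H₂.edges) :
    H₁ = H₂ := by
  cases H₁; cases H₂; simp_all

theorem restrict_verts_of_subset {X : Finset α} (hX : X ⊆ H.verts) :
    (H.restrict X).verts = X :=
  Finset.inter_eq_left.mpr hX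

theorem restrict_restrict (A B : Finset α) :
    (H.restrict A).restrict B = H.restrict (B ∩ A) := by
  refine ext (Finset.inter_assoc _ _ _).symm ?_
  show (H.edges.filter (· ⊆ A)).filter (· ⊆ B) = H.edges.filter (· ⊆ B ∩ A)
  rw [Finset.filter_filter]
  simp only [Finset.subset_inter_iff, and_comm]

theorem restrict_self : H.restrict H.verts = H :=
  ext (Finset.inter_self _) (Finset.filter_true_of_mem H.edges_subset)

theorem restrict_restrict_of_subset {A B : Finset α} (hBA : B ⊆ A) :
    (H.restrict A).restrict B = H.restrict B := by
  rw [restrict_restrict, Finset.inter_eq_left.mpr hBA]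

theorem exists_isComponent_superset {C : Finset α} (hC : C ⊆ H.verts)
    (hconn : (H.restrict C).Connected) : ∃ M, H.IsComponent M ∧ C ⊆ M := by
  set 𝒟 := H.verts.powerset.filter fun D => C ⊆ D ∧ (H.restrict D).Connected
  have hC𝒟 : C ∈ 𝒟 := by simp [𝒟, hC, hconn]
  obtain ⟨M, hM𝒟, hMmax⟩ := Finset.exists_max_image 𝒟 Finset.card ⟨C, hC𝒟⟩
  simp only [𝒟, Finset.mem_filter, Finset.mem_powerset] at hM𝒟
  refine ⟨M, ⟨hM𝒟.1, hM𝒟.2.2, fun D hMD hD hDconn => ?_⟩, hM𝒟.2.1⟩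
  have hD𝒟 : D ∈ 𝒟 := by simp [𝒟, hD, hM𝒟.2.1.trans hMD, hDconn]
  exact (Finset.eq_of_subset_of_card_le hMD (hMmax D hD𝒟)).symm

theorem sameComponent_iff {y z : α} :
    H.SameComponent y z ↔
      ∃ C ⊆ H.verts, (H.restrict C).Connected ∧ y ∈ C ∧ z ∈ C := by
  constructor
  · rintro ⟨C, ⟨hC, hconn, -⟩, hy, hz⟩
    exact ⟨C, hC, hconn, hy, hz⟩
  · rintro ⟨C, hC, hconn, hy, hz⟩
    obtain ⟨M, hM, hCM⟩ := H.exists_isComponent_superset hC hconn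
    exact ⟨M, hM, hCM hy, hCM hz⟩

theorem links_restrict {Y : Finset α} (hY : Y ⊆ H.verts) (x y z : α) :
    (H.restrict Y).Links x y z ↔ (H.restrict (Y \ {x})).SameComponent y z := by
  rw [Links, restrict_verts_of_subset _ hY, restrict_restrict_of_subset _ Finset.sdiff_subset]

/-- A cut point `c ∉ X` splits `X` into the parts below and above `c`, and no order-connected
edge can meet both. -/
theorem ordConnected_of_connected [LinearOrder α]
    (hE : ∀ e ∈ H.edges, (e : Set α).OrdConnected) {X : Finset α} (hX : X ⊆ H.verts)
    (hconn : (H.restrict X).Connected) : (X : Set α).OrdConnected := by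
  refine ⟨fun a ha b hb c hc => ?_⟩
  by_contra hcX
  have hlt : ∀ u ∈ X, u < c ∨ c < u := fun u hu => lt_or_gt_of_ne fun h => hcX (h ▸ hu)
  obtain ⟨e, he, hbelow, habove⟩ := hconn.2 (X.filter (· < c)) (X.filter (c < ·))
    ⟨a, by simpa using ⟨ha, hc.1.lt_of_ne fun h => hcX (h ▸ ha)⟩⟩
    ⟨b, by simpa using ⟨hb, hc.2.lt_of_ne' fun h => hcX (h ▸ hb)⟩⟩
    (Finset.disjoint_filter.mpr fun u _ h₁ h₂ => lt_asymm h₁ h₂)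
    (by rw [restrict_verts_of_subset _ hX, ← Finset.filter_or,
      Finset.filter_true_of_mem hlt])
  obtain ⟨heE, heX⟩ := Finset.mem_filter.mp he
  obtain ⟨u, hue, hu⟩ := Finset.not_subset.mp habove
  obtain ⟨v, hve, hv⟩ := Finset.not_subset.mp hbelow
  have hvc : c < v := (hlt v (heX hve)).resolve_left fun h => hv (by simpa using ⟨heX hve, h⟩)
  have huc : u < c := (hlt u (heX hue)).resolve_right fun h => hu (by simpa using ⟨heX hue, h⟩)
  exact hcX (heX ((hE e heE).out hue hve ⟨huc.le, hvc.le⟩))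

end

theorem connected_restrict_of_ordConnected (H : NestHypergraph ℕ) {X : Finset ℕ}
    (hpair : ∀ i, i ∈ X → i + 1 ∈ X → {i, i + 1} ∈ H.edges) (hX : X ⊆ H.verts)
    (hne : X.Nonempty) (hoc : (X : Set ℕ).OrdConnected) : (H.restrict X).Connected := by
  rw [Connected, restrict_verts_of_subset _ hX]
  refine ⟨hne, fun X₁ X₂ h₁ h₂ hd hu => ?_⟩
  wlog hab : ∃ a ∈ X₁, ∃ b ∈ X₂, a ≤ b generalizing X₁ X₂
  · obtain ⟨a, ha⟩ := h₁
    obtain ⟨b, hb⟩ := h₂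
    obtain ⟨e, he, h₂e, h₁e⟩ := this X₂ X₁ ⟨b, hb⟩ ⟨a, ha⟩ hd.symm (by rw [Finset.union_comm, hu])
      ⟨b, hb, a, ha, (not_le.mp fun h => hab ⟨a, ha, b, hb, h⟩).le⟩
    exact ⟨e, he, h₁e, h₂e⟩
  obtain ⟨a, ha, b, hb, hab⟩ := hab
  obtain ⟨i, hai, hib, hi₁, hi₁'⟩ := Nat.exists_le_lt_of_not (p := (· ∈ X₁)) hab ha
    (Finset.disjoint_right.mp hd hb)
  have hIcc : Set.Icc a b ⊆ X :=
    hoc.out (hu ▸ Finset.mem_union_left _ ha) (hu ▸ Finset.mem_union_right _ hb)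
  have hiX : i ∈ X := hIcc ⟨hai, hib.le⟩
  have hi1X : i + 1 ∈ X := hIcc ⟨by omega, hib⟩
  refine ⟨{i, i + 1}, Finset.mem_filter.mpr ⟨hpair i hiX hi1X, ?_⟩, ?_, ?_⟩
  · simp [Finset.insert_subset_iff, hiX, hi1X]
  · exact fun h => hi₁' (h (by simp))
  · exact fun h => Finset.disjoint_left.mp hd hi₁ (h (by simp))

end NestHypergraph

namespace linearH

open NestHypergraph

theorem pair_mem {n i : ℕ} (hi : i ∈ (linearH n).verts) (hi1 : i + 1 ∈ (linearH n).verts) :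
    {i, i + 1} ∈ (linearH n).edges := by
  simp only [linearH, Finset.mem_Icc] at hi hi1
  exact Finset.mem_union_right _ (Finset.mem_image_of_mem _ (Finset.mem_Icc.mpr ⟨hi.1, by omega⟩))

theorem edge_ordConnected {n : ℕ} {e : Finset ℕ} (he : e ∈ (linearH n).edges) :
    (e : Set ℕ).OrdConnected := by
  rcases Finset.mem_union.mp he with h | h <;> obtain ⟨i, -, rfl⟩ := Finset.mem_image.mp h
  · simpa using Set.ordConnected_singleton
  · have : (({i, i + 1} : Finset ℕ) : Set ℕ) = Set.Icc i (i + 1) := by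
      ext c; simp only [Finset.coe_insert, Finset.coe_singleton, Set.mem_insert_iff,
        Set.mem_singleton_iff, Set.mem_Icc]; omega
    rw [this]
    exact Set.ordConnected_Icc

theorem connected_restrict_iff {n : ℕ} {X : Finset ℕ} (hX : X ⊆ (linearH n).verts) :
    ((linearH n).restrict X).Connected ↔ X.Nonempty ∧ (X : Set ℕ).OrdConnected := by
  refine ⟨fun h => ⟨?_, ordConnected_of_connected _ (fun _ => edge_ordConnected) hX h⟩,
    fun h => connected_restrict_of_ordConnected _ (fun _ hi hi1 => pair_mem (hX hi) (hX hi1))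
      hX h.1 h.2⟩
  simpa [restrict_verts_of_subset _ hX] using h.1

theorem sameComponent_restrict_iff {n : ℕ} {S : Finset ℕ} (hS : S ⊆ (linearH n).verts)
    {y z : ℕ} : ((linearH n).restrict S).SameComponent y z ↔ Finset.uIcc y z ⊆ S := by
  rw [sameComponent_iff, restrict_verts_of_subset _ hS]
  constructor
  · rintro ⟨C, hCS, hconn, hy, hz⟩
    rw [restrict_restrict_of_subset _ hCS, connected_restrict_iff (hCS.trans hS)] at hconn
    rw [← Finset.coe_subset, Finset.coe_uIcc]
    exact (hconn.2.uIcc_subset hy hz).trans (Finset.coe_subset.mpr hCS)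
  · intro hyz
    refine ⟨_, hyz, ?_, Finset.left_mem_uIcc, Finset.right_mem_uIcc⟩
    rw [restrict_restrict_of_subset _ hyz, connected_restrict_iff (hyz.trans hS),
      Finset.coe_uIcc]
    exact ⟨Finset.nonempty_uIcc, Set.ordConnected_uIcc⟩

end linearH

/-- Theorem `thm:examples` (c).  Every associahedron hypergraph `𝕂ₙ`
(the linear graph on `n+1` vertices) is a connected contextual hypergraph. -/
theorem stmt17 : ∀ n : ℕ, (linearH n).Connected ∧ (linearH n).Contextual := by
  intro n
  refine ⟨?_, fun Y hY hconn _ x y z _ hy hz _ _ _ => ?_⟩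
  · rw [← (linearH n).restrict_self, linearH.connected_restrict_iff subset_rfl]
    exact ⟨⟨1, by simp [linearH]⟩, by simpa [linearH] using Set.ordConnected_Icc⟩
  have hyzY : Finset.uIcc y z ⊆ Y := by
    rw [linearH.connected_restrict_iff hY] at hconn
    rw [← Finset.coe_subset, Finset.coe_uIcc]
    exact hconn.2.uIcc_subset hy hz
  rw [NestHypergraph.links_restrict _ hY, NestHypergraph.Links,
    linearH.sameComponent_restrict_iff (Finset.sdiff_subset.trans hY),
    linearH.sameComponent_restrict_iff Finset.sdiff_subset, Finset.subset_sdiff,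
    Finset.subset_sdiff]
  exact and_congr_left fun _ => iff_of_true hyzY (hyzY.trans hY)
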